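/- arXiv:2308.08184 — 2 statements merged into one kernel-verified Lean document; each statement's English description precedes it below -/
import Mathlib

section
/- Let λ, μ ∈ ℝ with μ > 0 and λ + μ > 0, let ρ > 0 and ω̃ ∈ ℂ with ω̃ ≠ 0, and set k₁² = ρω̃²/(λ+2μ), k₂² = ρω̃²/μ. Fix ξ ∈ ℝ³ and define, for x ≠ ξ, r = ‖x − ξ‖ and the 3×3 matrix-valued function u*(x) with components u*_{ij}(x) = (1/(4πρω̃²)) ∂_i∂_j[(exp(ik₂r) − exp(ik₁r))/r] + (1/(4πμ)) (exp(ik₂r)/r) δ_{ij}. Then every column of u* satisfies the homogeneous time-harmonic viscoelastic Navier equation away from the source: for each m and each x ≠ ξ, (λ+μ)∂_j(∂₁u*_{1m} + ∂₂u*_{2m} + ∂₃u*_{3m})(x) + μΔu*_{jm}(x) + ρω̃² u*_{jm}(x) = 0 for j = 1,2,3. -/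
open Complex Matrix

/-- Partial derivative in the j-th coordinate direction of a function on ℝ³. -/
noncomputable def pd (j : Fin 3) (f : (Fin 3 → ℝ) → ℂ) : (Fin 3 → ℝ) → ℂ :=
  fun x => fderiv ℝ f x (Pi.single j 1)

/-- The Laplace operator Δ = ∂₁² + ∂₂² + ∂₃² on ℝ³. -/
noncomputable def lap (f : (Fin 3 → ℝ) → ℂ) : (Fin 3 → ℝ) → ℂ :=
  fun x => ∑ j : Fin 3, pd j (pd j f) x

/-- The divergence ∂₁u₁ + ∂₂u₂ + ∂₃u₃ of a vector field u : ℝ³ → ℂ³. -/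
noncomputable def divg (u : (Fin 3 → ℝ) → Fin 3 → ℂ) : (Fin 3 → ℝ) → ℂ :=
  fun x => ∑ i : Fin 3, pd i (fun y => u y i) x

/-- The time-harmonic viscoelastic Navier operator
`(L u)_j = (λ+μ)∂_j(div u) + μ Δ u_j + ρ ω̃² u_j`. -/
noncomputable def navierOp (lam mu rho om : ℂ) (u : (Fin 3 → ℝ) → Fin 3 → ℂ)
    (j : Fin 3) : (Fin 3 → ℝ) → ℂ :=
  fun x => (lam + mu) * pd j (divg u) x + mu * lap (fun y => u y j) x +
    rho * om ^ 2 * u x j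


/-!
Write `g_k = e^{ikr}/r`. Away from `ξ` it is smooth and solves the Helmholtz equation
`Δ g_k = -k² g_k`, and `u*_{·m} = A ∇∂_m (g_{k₂} - g_{k₁}) + B e_m g_{k₂}` with
`A = 1/(4πρω̃²)`, `B = 1/(4πμ) = A k₂²`. As partial derivatives commute on smooth functions,
`div u*_{·m} = A ∂_m Δ(g_{k₂} - g_{k₁}) + B ∂_m g_{k₂} = A k₁² ∂_m g_{k₁}` and
`Δ u*_{jm} = A ∂_j∂_m (k₁² g_{k₁} - k₂² g_{k₂}) - B k₂² δ_{jm} g_{k₂}`. In the Navier operator the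
coefficients of `∂_j∂_m g_{k₁}`, `∂_j∂_m g_{k₂}` and `δ_{jm} g_{k₂}` are then multiples of
`(λ+2μ)k₁² - ρω̃²` and `μk₂² - ρω̃²`, which vanish by the choice of `k₁`, `k₂`.
-/

open Set Filter Topology
open scoped ContDiff

section PartialDerivatives

variable {f g : (Fin 3 → ℝ) → ℂ} {x : Fin 3 → ℝ} {U : Set (Fin 3 → ℝ)}

theorem pd_congr_of_eventuallyEq (h : f =ᶠ[𝓝 x] g) (j : Fin 3) : pd j f x = pd j g x := by
  simp only [pd, h.fderiv_eq]

theorem pd_congr_of_eqOn (hU : IsOpen U) (h : EqOn f g U) (hx : x ∈ U) (j : Fin 3) :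
    pd j f x = pd j g x :=
  pd_congr_of_eventuallyEq (eventuallyEq_of_mem (hU.mem_nhds hx) h) j

theorem pd_add (hf : DifferentiableAt ℝ f x) (hg : DifferentiableAt ℝ g x) (j : Fin 3) :
    pd j (f + g) x = pd j f x + pd j g x := by
  simp [pd, fderiv_add hf hg]

theorem pd_sub (hf : DifferentiableAt ℝ f x) (hg : DifferentiableAt ℝ g x) (j : Fin 3) :
    pd j (f - g) x = pd j f x - pd j g x := by
  simp [pd, fderiv_sub hf hg]

theorem pd_const_smul (c : ℂ) (j : Fin 3) : pd j (c • f) = c • pd j f := by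
  ext x
  simp [pd, fderiv_const_smul_field]

theorem pd_sum {ι : Type*} (s : Finset ι) {F : ι → (Fin 3 → ℝ) → ℂ}
    (hF : ∀ i ∈ s, DifferentiableAt ℝ (F i) x) (j : Fin 3) :
    pd j (∑ i ∈ s, F i) x = ∑ i ∈ s, pd j (F i) x := by
  simp [pd, fderiv_sum hF]

theorem ContDiffOn.differentiableAt_of_isOpen (hf : ContDiffOn ℝ ∞ f U) (hU : IsOpen U)
    (hx : x ∈ U) : DifferentiableAt ℝ f x :=
  (hf.contDiffAt (hU.mem_nhds hx)).differentiableAt (by simp)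

theorem ContDiffOn.pd (hU : IsOpen U) (hf : ContDiffOn ℝ ∞ f U) (j : Fin 3) :
    ContDiffOn ℝ ∞ (pd j f) U :=
  (hf.fderiv_of_isOpen hU le_rfl).clm_apply contDiffOn_const

theorem pd_pd_comm (hf : ContDiffAt ℝ 2 f x) (i j : Fin 3) :
    pd i (pd j f) x = pd j (pd i f) x := by
  have hd : DifferentiableAt ℝ (fderiv ℝ f) x :=
    (hf.fderiv_right (m := 1) le_rfl).differentiableAt one_ne_zero
  have hpd_pd : ∀ a b, pd a (pd b f) x =
      fderiv ℝ (fderiv ℝ f) x (Pi.single a 1) (Pi.single b 1) := fun a b => by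
    change fderiv ℝ (fun y => fderiv ℝ f y (Pi.single b 1)) x (Pi.single a 1) = _
    simp [fderiv_clm_apply hd (differentiableAt_const _)]
  rw [hpd_pd, hpd_pd, hf.isSymmSndFDerivAt (by simp)]

theorem lap_const_smul (c : ℂ) : lap (c • f) = c • lap f := by
  ext x
  simp [lap, pd_const_smul, Finset.mul_sum]

theorem lap_add (hU : IsOpen U) (hf : ContDiffOn ℝ ∞ f U) (hg : ContDiffOn ℝ ∞ g U)
    (hx : x ∈ U) : lap (f + g) x = lap f x + lap g x := by
  have h : ∀ l, pd l (pd l (f + g)) x = pd l (pd l f) x + pd l (pd l g) x := fun l => by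
    rw [pd_congr_of_eqOn hU (fun y hy => pd_add (hf.differentiableAt_of_isOpen hU hy)
      (hg.differentiableAt_of_isOpen hU hy) l) hx l]
    exact pd_add ((hf.pd hU l).differentiableAt_of_isOpen hU hx)
      ((hg.pd hU l).differentiableAt_of_isOpen hU hx) l
  simp only [lap, h, Finset.sum_add_distrib]

theorem lap_sub (hU : IsOpen U) (hf : ContDiffOn ℝ ∞ f U) (hg : ContDiffOn ℝ ∞ g U)
    (hx : x ∈ U) : lap (f - g) x = lap f x - lap g x := by
  have h : lap (f + (-1 : ℂ) • g) x = lap f x + lap ((-1 : ℂ) • g) x :=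
    lap_add hU hf (hg.const_smul (-1 : ℂ)) hx
  rw [show f - g = f + (-1 : ℂ) • g by simp [sub_eq_add_neg], h, lap_const_smul]
  simp [sub_eq_add_neg]

theorem lap_pd (hU : IsOpen U) (hf : ContDiffOn ℝ ∞ f U) (hx : x ∈ U) (j : Fin 3) :
    lap (pd j f) x = pd j (lap f) x := by
  have hC2 : ∀ {h : (Fin 3 → ℝ) → ℂ}, ContDiffOn ℝ ∞ h U → ∀ y ∈ U, ContDiffAt ℝ 2 h y :=
    fun hh y hy => (hh.contDiffAt (hU.mem_nhds hy)).of_le (by norm_cast)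
  have hswap : ∀ l, pd l (pd l (pd j f)) x = pd j (pd l (pd l f)) x := fun l => by
    rw [pd_congr_of_eqOn hU (fun y hy => pd_pd_comm (hC2 hf y hy) l j) hx l,
      pd_pd_comm (hC2 (hf.pd hU l) x hx) l j]
  have hlap : lap f = ∑ l, pd l (pd l f) := by
    ext y
    simp [lap]
  rw [hlap, pd_sum _ (fun l _ => ((hf.pd hU l).pd hU l).differentiableAt_of_isOpen hU hx)]
  simp only [lap, hswap]

end PartialDerivatives

section Radial

variable {ξ y : Fin 3 → ℝ}

noncomputable def radius (ξ y : Fin 3 → ℝ) : ℝ := √(∑ i, (y i - ξ i) ^ 2)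

theorem sum_sq_sub_pos (hy : y ≠ ξ) : 0 < ∑ i, (y i - ξ i) ^ 2 := by
  obtain ⟨i, hi⟩ : ∃ i, y i ≠ ξ i := Function.ne_iff.mp hy
  exact Finset.sum_pos' (fun _ _ => sq_nonneg _)
    ⟨i, Finset.mem_univ i, by positivity [sub_ne_zero.mpr hi]⟩

theorem radius_ne_zero (hy : y ≠ ξ) : radius ξ y ≠ 0 :=
  (Real.sqrt_pos.mpr (sum_sq_sub_pos hy)).ne'

theorem radius_sq (ξ y : Fin 3 → ℝ) : radius ξ y ^ 2 = ∑ i, (y i - ξ i) ^ 2 :=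
  Real.sq_sqrt (Finset.sum_nonneg fun _ _ => sq_nonneg _)

theorem hasFDerivAt_radius (hy : y ≠ ξ) :
    HasFDerivAt (radius ξ)
      ((radius ξ y)⁻¹ • ∑ i, (y i - ξ i) • ContinuousLinearMap.proj (R := ℝ) i) y := by
  have hsq : HasFDerivAt (fun z : Fin 3 → ℝ => ∑ i, (z i - ξ i) ^ 2)
      (∑ i, (2 • (y i - ξ i) ^ 1) • ContinuousLinearMap.proj (R := ℝ) i) y :=
    HasFDerivAt.fun_sum fun i _ => ((hasFDerivAt_apply i y).sub_const (ξ i)).pow 2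
  refine (hsq.sqrt (sum_sq_sub_pos hy).ne').congr_fderiv ?_
  ext v
  simp [radius, mul_assoc, ← Finset.mul_sum]

/- Radial profiles are differentiated with `t⁻¹ d/dt`: if `F' t = t * G t`, then
`∂ₗ F(r) = (yₗ - ξₗ) G(r)` without any division by `r`. -/
theorem hasFDerivAt_comp_radius {F G : ℝ → ℂ}
    (hF : HasDerivAt F (radius ξ y * G (radius ξ y)) (radius ξ y)) (hy : y ≠ ξ) :
    HasFDerivAt (fun z => F (radius ξ z))
      ((∑ i, (y i - ξ i) • ContinuousLinearMap.proj (R := ℝ) i).smulRight (G (radius ξ y)))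
      y := by
  refine (hF.hasFDerivAt.comp y (hasFDerivAt_radius hy)).congr_fderiv ?_
  ext v
  have hr : (radius ξ y : ℂ) ≠ 0 := Complex.ofReal_ne_zero.mpr (radius_ne_zero hy)
  simp only [ContinuousLinearMap.comp_apply, ContinuousLinearMap.smulRight_apply,
    ContinuousLinearMap.toSpanSingleton_apply, _root_.smul_apply, Complex.real_smul,
    smul_eq_mul]
  push_cast
  field_simp

theorem pd_comp_radius {F G : ℝ → ℂ}
    (hF : HasDerivAt F (radius ξ y * G (radius ξ y)) (radius ξ y)) (hy : y ≠ ξ) (l : Fin 3) :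
    pd l (fun z => F (radius ξ z)) y = (y l - ξ l : ℝ) * G (radius ξ y) := by
  simp [pd, (hasFDerivAt_comp_radius hF hy).fderiv, Pi.single_apply]

theorem lap_comp_radius {F G H : ℝ → ℂ} (hF : ∀ t ≠ 0, HasDerivAt F (t * G t) t)
    (hG : ∀ t ≠ 0, HasDerivAt G (t * H t) t) (hy : y ≠ ξ) :
    lap (fun z => F (radius ξ z)) y = 3 * G (radius ξ y) + radius ξ y ^ 2 * H (radius ξ y) := by
  have hpd : ∀ l, pd l (pd l fun z => F (radius ξ z)) y =
      G (radius ξ y) + ((y l - ξ l : ℝ) : ℂ) ^ 2 * H (radius ξ y) := fun l => by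
    have hd : HasFDerivAt (fun z => ((z l - ξ l : ℝ) : ℂ) * G (radius ξ z)) _ y :=
      (Complex.ofRealCLM.hasFDerivAt.comp y ((hasFDerivAt_apply l y).sub_const (ξ l))).fun_mul
        (hasFDerivAt_comp_radius (hG _ (radius_ne_zero hy)) hy)
    rw [pd_congr_of_eqOn isOpen_compl_singleton
      (fun z hz => pd_comp_radius (hF _ (radius_ne_zero hz)) hz l) hy l, pd, hd.fderiv]
    simp only [_root_.add_apply, _root_.smul_apply, ContinuousLinearMap.smulRight_apply,
      ContinuousLinearMap.comp_apply, _root_.sum_apply, ContinuousLinearMap.proj_apply,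
      Function.comp_apply, ofRealCLM_apply, ofReal_sub, Pi.single_apply, smul_eq_mul, mul_ite,
      mul_one, mul_zero, Finset.sum_ite_eq', Finset.mem_univ, ↓reduceIte, real_smul, ofReal_one]
    ring
  have hsq : ∑ l, ((y l - ξ l : ℝ) : ℂ) ^ 2 = radius ξ y ^ 2 := by
    exact_mod_cast (radius_sq ξ y).symm
  simp only [lap, hpd, Finset.sum_add_distrib, ← Finset.sum_mul, hsq]
  simp

end Radial

section SphericalWave

noncomputable def sphericalWave (k : ℂ) (t : ℝ) : ℂ := cexp (I * k * t) / t

theorem hasDerivAt_ofReal (t : ℝ) : HasDerivAt (fun s : ℝ => (s : ℂ)) 1 t := by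
  simpa using (hasDerivAt_id t).ofReal_comp

theorem hasDerivAt_cexp_I_mul (k : ℂ) (t : ℝ) :
    HasDerivAt (fun s : ℝ => cexp (I * k * s)) (cexp (I * k * t) * (I * k)) t := by
  simpa using ((hasDerivAt_ofReal t).const_mul (I * k)).cexp

theorem hasDerivAt_sphericalWave (k : ℂ) {t : ℝ} (ht : t ≠ 0) :
    HasDerivAt (sphericalWave k) (t * (cexp (I * k * t) * (I * k * t - 1) / t ^ 3)) t := by
  have ht' : (t : ℂ) ≠ 0 := Complex.ofReal_ne_zero.mpr ht
  refine ((hasDerivAt_cexp_I_mul k t).fun_div (hasDerivAt_ofReal t) ht').congr_deriv ?_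
  field_simp

theorem hasDerivAt_sphericalWave_reduced (k : ℂ) {t : ℝ} (ht : t ≠ 0) :
    HasDerivAt (fun s : ℝ => cexp (I * k * s) * (I * k * s - 1) / s ^ 3)
      (t * (cexp (I * k * t) * (3 - 3 * I * k * t - k ^ 2 * t ^ 2) / t ^ 5)) t := by
  have ht' : (t : ℂ) ≠ 0 := Complex.ofReal_ne_zero.mpr ht
  have hlin : HasDerivAt (fun s : ℝ => I * k * s - 1) (I * k) t := by
    simpa using ((hasDerivAt_ofReal t).const_mul (I * k)).sub_const 1
  refine (((hasDerivAt_cexp_I_mul k t).fun_mul hlin).fun_div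
    ((hasDerivAt_ofReal t).fun_pow 3) (pow_ne_zero 3 ht')).congr_deriv ?_
  field_simp
  linear_combination k ^ 2 * t ^ 4 * I_sq

theorem lap_sphericalWave_comp_radius (k : ℂ) {ξ y : Fin 3 → ℝ} (hy : y ≠ ξ) :
    lap (fun z => sphericalWave k (radius ξ z)) y = -k ^ 2 * sphericalWave k (radius ξ y) := by
  rw [lap_comp_radius (fun t ht => hasDerivAt_sphericalWave k ht)
    (fun t ht => hasDerivAt_sphericalWave_reduced k ht) hy]
  have hr : (radius ξ y : ℂ) ≠ 0 := Complex.ofReal_ne_zero.mpr (radius_ne_zero hy)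
  simp only [sphericalWave]
  field_simp
  ring

theorem contDiffOn_sphericalWave_comp_radius (k : ℂ) (ξ : Fin 3 → ℝ) :
    ContDiffOn ℝ ∞ (fun z => sphericalWave k (radius ξ z)) {ξ}ᶜ := by
  intro y hy
  have hr : ContDiffAt ℝ ∞ (fun z => (radius ξ z : ℂ)) y :=
    Complex.ofRealCLM.contDiff.contDiffAt.comp y
      ((ContDiff.contDiffAt (by fun_prop)).sqrt (sum_sq_sub_pos hy).ne')
  have hr0 : (radius ξ y : ℂ) ≠ 0 := Complex.ofReal_ne_zero.mpr (radius_ne_zero hy)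
  simp only [sphericalWave, div_eq_mul_inv]
  exact ((hr.const_smul (I * k)).cexp.mul (hr.inv hr0)).contDiffWithinAt

end SphericalWave

section Kupradze

variable {U : Set (Fin 3 → ℝ)} {g₁ g₂ : (Fin 3 → ℝ) → ℂ} {k₁ k₂ A B : ℂ}

noncomputable def kupradzeColumn (A B : ℂ) (g₁ g₂ : (Fin 3 → ℝ) → ℂ) (m : Fin 3) :
    (Fin 3 → ℝ) → Fin 3 → ℂ :=
  fun y i => A * pd i (pd m (g₂ - g₁)) y + B * (if i = m then 1 else 0) * g₂ y

theorem kupradzeColumn_component (m i : Fin 3) :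
    (fun y => kupradzeColumn A B g₁ g₂ m y i) =
      A • pd i (pd m (g₂ - g₁)) + (B * if i = m then 1 else 0) • g₂ :=
  rfl

theorem pd_lap_sub_of_helmholtz (hU : IsOpen U) (hg₁ : ContDiffOn ℝ ∞ g₁ U)
    (hg₂ : ContDiffOn ℝ ∞ g₂ U) (hH₁ : ∀ y ∈ U, lap g₁ y = -k₁ ^ 2 * g₁ y)
    (hH₂ : ∀ y ∈ U, lap g₂ y = -k₂ ^ 2 * g₂ y) (i : Fin 3) :
    EqOn (pd i (lap (g₂ - g₁))) (k₁ ^ 2 • pd i g₁ - k₂ ^ 2 • pd i g₂) U := fun y hy => by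
  have hlap : EqOn (lap (g₂ - g₁)) (k₁ ^ 2 • g₁ - k₂ ^ 2 • g₂) U := fun z hz => by
    rw [lap_sub hU hg₂ hg₁ hz, hH₁ z hz, hH₂ z hz]
    simp only [Pi.sub_apply, Pi.smul_apply, smul_eq_mul]
    ring
  rw [pd_congr_of_eqOn hU hlap hy,
    pd_sub ((hg₁.differentiableAt_of_isOpen hU hy).const_smul _)
      ((hg₂.differentiableAt_of_isOpen hU hy).const_smul _), pd_const_smul, pd_const_smul]
  rfl

theorem divg_kupradzeColumn (hU : IsOpen U) (hg₁ : ContDiffOn ℝ ∞ g₁ U)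
    (hg₂ : ContDiffOn ℝ ∞ g₂ U) (hH₁ : ∀ y ∈ U, lap g₁ y = -k₁ ^ 2 * g₁ y)
    (hH₂ : ∀ y ∈ U, lap g₂ y = -k₂ ^ 2 * g₂ y) (hAB : A * k₂ ^ 2 = B) (m : Fin 3) :
    EqOn (divg (kupradzeColumn A B g₁ g₂ m)) ((A * k₁ ^ 2) • pd m g₁) U := fun y hy => by
  have hΦ : ContDiffOn ℝ ∞ (g₂ - g₁) U := hg₂.sub hg₁
  have hcol : ∀ i, pd i (fun z => kupradzeColumn A B g₁ g₂ m z i) y =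
      A * pd i (pd i (pd m (g₂ - g₁))) y + B * (if i = m then 1 else 0) * pd i g₂ y := fun i => by
    rw [kupradzeColumn_component,
      pd_add ((((hΦ.pd hU m).pd hU i).differentiableAt_of_isOpen hU hy).const_smul A)
        ((hg₂.differentiableAt_of_isOpen hU hy).const_smul _), pd_const_smul, pd_const_smul]
    rfl
  have hlap : lap (pd m (g₂ - g₁)) y = k₁ ^ 2 * pd m g₁ y - k₂ ^ 2 * pd m g₂ y := by
    rw [lap_pd hU hΦ hy, pd_lap_sub_of_helmholtz hU hg₁ hg₂ hH₁ hH₂ m hy]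
    rfl
  calc divg (kupradzeColumn A B g₁ g₂ m) y
      = A * lap (pd m (g₂ - g₁)) y + B * pd m g₂ y := by
        simp only [divg, hcol, lap, Finset.sum_add_distrib, Finset.mul_sum]
        simp
    _ = (A * k₁ ^ 2) • pd m g₁ y := by
        rw [hlap, ← hAB, smul_eq_mul]
        ring

theorem lap_kupradzeColumn (hU : IsOpen U) (hg₁ : ContDiffOn ℝ ∞ g₁ U)
    (hg₂ : ContDiffOn ℝ ∞ g₂ U) (hH₁ : ∀ y ∈ U, lap g₁ y = -k₁ ^ 2 * g₁ y)
    (hH₂ : ∀ y ∈ U, lap g₂ y = -k₂ ^ 2 * g₂ y) (m j : Fin 3) {x : Fin 3 → ℝ} (hx : x ∈ U) :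
    lap (fun y => kupradzeColumn A B g₁ g₂ m y j) x =
      A * (k₁ ^ 2 * pd j (pd m g₁) x - k₂ ^ 2 * pd j (pd m g₂) x) +
        B * (if j = m then 1 else 0) * (-k₂ ^ 2 * g₂ x) := by
  have hΦ : ContDiffOn ℝ ∞ (g₂ - g₁) U := hg₂.sub hg₁
  have hhess_lap : pd j (pd m (lap (g₂ - g₁))) x =
      k₁ ^ 2 * pd j (pd m g₁) x - k₂ ^ 2 * pd j (pd m g₂) x := by
    rw [pd_congr_of_eqOn hU (pd_lap_sub_of_helmholtz hU hg₁ hg₂ hH₁ hH₂ m) hx,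
      pd_sub (((hg₁.pd hU m).differentiableAt_of_isOpen hU hx).const_smul _)
        (((hg₂.pd hU m).differentiableAt_of_isOpen hU hx).const_smul _),
      pd_const_smul, pd_const_smul]
    rfl
  rw [kupradzeColumn_component,
    lap_add (f := A • _) (g := _ • g₂) hU (((hΦ.pd hU m).pd hU j).const_smul A)
      (hg₂.const_smul (B * if j = m then 1 else 0)) hx,
    lap_const_smul, lap_const_smul, Pi.smul_apply, Pi.smul_apply, lap_pd hU (hΦ.pd hU m) hx,
    pd_congr_of_eqOn hU (fun y hy => lap_pd hU hΦ hy m) hx,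
    hhess_lap, hH₂ x hx]
  rfl

theorem navierOp_kupradzeColumn_eq_zero (hU : IsOpen U) (hg₁ : ContDiffOn ℝ ∞ g₁ U)
    (hg₂ : ContDiffOn ℝ ∞ g₂ U) (hH₁ : ∀ y ∈ U, lap g₁ y = -k₁ ^ 2 * g₁ y)
    (hH₂ : ∀ y ∈ U, lap g₂ y = -k₂ ^ 2 * g₂ y) {lam mu rho om : ℂ}
    (h₁ : (lam + 2 * mu) * k₁ ^ 2 = rho * om ^ 2) (h₂ : mu * k₂ ^ 2 = rho * om ^ 2)
    (hAB : A * k₂ ^ 2 = B) (m j : Fin 3) {x : Fin 3 → ℝ} (hx : x ∈ U) :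
    navierOp lam mu rho om (kupradzeColumn A B g₁ g₂ m) j x = 0 := by
  have hgrad_div : pd j (divg (kupradzeColumn A B g₁ g₂ m)) x =
      A * k₁ ^ 2 * pd j (pd m g₁) x := by
    rw [pd_congr_of_eqOn hU (divg_kupradzeColumn hU hg₁ hg₂ hH₁ hH₂ hAB m) hx, pd_const_smul]
    rfl
  have hhess : pd j (pd m (g₂ - g₁)) x = pd j (pd m g₂) x - pd j (pd m g₁) x := by
    rw [pd_congr_of_eqOn hU (fun y hy => pd_sub (hg₂.differentiableAt_of_isOpen hU hy)
      (hg₁.differentiableAt_of_isOpen hU hy) m) hx]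
    exact pd_sub ((hg₂.pd hU m).differentiableAt_of_isOpen hU hx)
      ((hg₁.pd hU m).differentiableAt_of_isOpen hU hx) j
  rw [navierOp, hgrad_div, lap_kupradzeColumn hU hg₁ hg₂ hH₁ hH₂ m j hx, kupradzeColumn, hhess]
  linear_combination A * pd j (pd m g₁) x * h₁ - A * pd j (pd m g₂) x * h₂ -
    B * (if j = m then 1 else 0) * g₂ x * h₂

end Kupradze

theorem kupradze_fundamental_solves_navier
    (lam mu rho : ℝ) (hmu : 0 < mu) (hlm : 0 < lam + mu) (hrho : 0 < rho)
    (om k₁ k₂ : ℂ) (hom : om ≠ 0)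
    (hk₁ : k₁ ^ 2 = (rho : ℂ) * om ^ 2 / ((lam : ℂ) + 2 * mu))
    (hk₂ : k₂ ^ 2 = (rho : ℂ) * om ^ 2 / (mu : ℂ))
    (ξ : Fin 3 → ℝ)
    (r : (Fin 3 → ℝ) → ℝ)
    (hr : ∀ x, r x = Real.sqrt ((x 0 - ξ 0) ^ 2 + (x 1 - ξ 1) ^ 2 + (x 2 - ξ 2) ^ 2))
    (φ : (Fin 3 → ℝ) → ℂ)
    (hφ : ∀ x, φ x =
      (Complex.exp (Complex.I * k₂ * r x) - Complex.exp (Complex.I * k₁ * r x)) / (r x : ℂ))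
    (ustar : Fin 3 → Fin 3 → (Fin 3 → ℝ) → ℂ)
    (hustar : ∀ i j x, ustar i j x =
      (1 / (4 * (Real.pi : ℂ) * rho * om ^ 2)) * pd i (pd j φ) x +
        (1 / (4 * (Real.pi : ℂ) * mu)) * (Complex.exp (Complex.I * k₂ * r x) / (r x : ℂ)) *
          (if i = j then 1 else 0)) :
    ∀ m : Fin 3, ∀ x : Fin 3 → ℝ, x ≠ ξ → ∀ j : Fin 3,
      navierOp (lam : ℂ) (mu : ℂ) (rho : ℂ) om (fun y i => ustar i m y) j x = 0 := by
  intro m x hx j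
  obtain rfl : r = radius ξ := funext fun y => by rw [hr, radius, Fin.sum_univ_three]
  have hφ' :
      φ = (fun y => sphericalWave k₂ (radius ξ y)) - fun y => sphericalWave k₁ (radius ξ y) :=
    funext fun y => by rw [hφ, sub_div]; rfl
  obtain rfl : ustar = fun i m y => kupradzeColumn (1 / (4 * (Real.pi : ℂ) * rho * om ^ 2))
      (1 / (4 * Real.pi * mu)) (fun y => sphericalWave k₁ (radius ξ y))
      (fun y => sphericalWave k₂ (radius ξ y)) m y i :=
    funext fun i => funext fun m => funext fun y => by
      rw [hustar, kupradzeColumn, ← hφ', sphericalWave]; ring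
  have hmu' : (mu : ℂ) ≠ 0 := by exact_mod_cast hmu.ne'
  have hlm' : (lam : ℂ) + 2 * mu ≠ 0 := by exact_mod_cast (by linarith : lam + 2 * mu ≠ 0)
  have hrho' : (rho : ℂ) ≠ 0 := by exact_mod_cast hrho.ne'
  have hpi : (Real.pi : ℂ) ≠ 0 := by exact_mod_cast Real.pi_ne_zero
  refine navierOp_kupradzeColumn_eq_zero isOpen_compl_singleton
    (contDiffOn_sphericalWave_comp_radius k₁ ξ) (contDiffOn_sphericalWave_comp_radius k₂ ξ)
    (fun y hy => lap_sphericalWave_comp_radius k₁ hy)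
    (fun y hy => lap_sphericalWave_comp_radius k₂ hy) ?_ ?_ ?_ m j hx
  · rw [hk₁]; field_simp
  · rw [hk₂]; field_simp
  · rw [hk₂]; field_simp
end

section
/- Let λ, μ ∈ ℝ, ρ > 0, ω̃ ∈ ℂ with λ+2μ ≠ 0 and μ ≠ 0, and set k₁² = ρω̃²/(λ+2μ), k₂² = ρω̃²/μ. Fix η₁, η₂ ∈ ℂ, let β₁, β₂ ∈ ℂ satisfy β₁² = η₁² + η₂² − k₁² and β₂² = η₁² + η₂² − k₂², set β₃ = β₂, and let ν¹ = (−η₁, −η₂, iβ₁), ν² = (−β₂, 0, iη₁), ν³ = (−η₂, η₁, 0). Then for any coefficients C¹, C², C³ ∈ ℂ, the function w : ℝ³ → ℂ³ given by w(x) = Σ_{m=1}^{3} Cᵐ νᵐ exp(β_m x₃ + i(η₁x₁ + η₂x₂)) satisfies the homogeneous time-harmonic viscoelastic Navier equation (λ+μ)∂_j(div w) + μΔw_j + ρω̃² w_j = 0 for j = 1,2,3 at every point of ℝ³. -/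
open Complex Matrix

/-!
Each summand of `w` is a plane wave `a · exp (c · x)` with wave vector `c = (iη₁, iη₂, β_m)`,
on which the Navier operator acts by multiplication with its symbol
`(λ+μ)(a·c) c + μ (c·c) a + ρω̃² a`. Here `c·c = β_m² - η₁² - η₂² = -k_m²`. The pressure
polarization `ν¹ = i c` is parallel to `c`, so the symbol reduces to `((λ+2μ)(c·c) + ρω̃²) ν¹`,
which vanishes because `(λ+2μ) k₁² = ρω̃²`; the shear polarizations `ν²` (SV) and `ν³` (SH)
are orthogonal to `c`, so the symbol reduces to `(μ (c·c) + ρω̃²) ν`, which vanishes because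
`μ k₂² = ρω̃²`.
-/

noncomputable def phaseCLM (c : Fin 3 → ℂ) : (Fin 3 → ℝ) →L[ℝ] ℂ :=
  ∑ i, c i • ofRealCLM.comp (ContinuousLinearMap.proj i)

lemma phaseCLM_apply (c : Fin 3 → ℂ) (y : Fin 3 → ℝ) : phaseCLM c y = ∑ i, c i * y i := by
  simp [phaseCLM]

lemma phaseCLM_single (c : Fin 3 → ℂ) (j : Fin 3) : phaseCLM c (Pi.single j 1) = c j := by
  simp [phaseCLM_apply, Pi.single_apply, apply_ite ((↑) : ℝ → ℂ)]

section PlaneWaves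

variable {ι : Type*} [Fintype ι]

lemma pd_sum_mul_cexp (a : ι → ℂ) (c : ι → Fin 3 → ℂ) (j : Fin 3) :
    pd j (fun y => ∑ m, a m * cexp (∑ i, c m i * y i)) =
      fun y => ∑ m, a m * c m j * cexp (∑ i, c m i * y i) := by
  funext x
  have hderiv : HasFDerivAt (fun y => ∑ m, a m * cexp (phaseCLM (c m) y))
      (∑ m, a m • cexp (phaseCLM (c m) x) • phaseCLM (c m)) x :=
    HasFDerivAt.fun_sum fun m _ => ((phaseCLM (c m)).hasFDerivAt.cexp).const_mul (a m)
  simp only [phaseCLM_apply] at hderiv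
  simp only [pd, hderiv.fderiv, FunLike.coe_sum, Finset.sum_apply,
    _root_.smul_apply, phaseCLM_single, smul_eq_mul]
  exact Finset.sum_congr rfl fun m _ => by ring

def navierSymbol (lam mu rho om : ℂ) (c a : Fin 3 → ℂ) : Fin 3 → ℂ :=
  fun j => (lam + mu) * (a ⬝ᵥ c) * c j + mu * (c ⬝ᵥ c) * a j + rho * om ^ 2 * a j

lemma navierOp_sum_mul_cexp (lam mu rho om : ℂ) (A c : ι → Fin 3 → ℂ)
    (w : (Fin 3 → ℝ) → Fin 3 → ℂ) (hw : ∀ x j, w x j = ∑ m, A m j * cexp (∑ i, c m i * x i))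
    (x : Fin 3 → ℝ) (j : Fin 3) :
    navierOp lam mu rho om w j x =
      ∑ m, navierSymbol lam mu rho om (c m) (A m) j * cexp (∑ i, c m i * x i) := by
  have hw' : ∀ j, (fun y => w y j) = fun y => ∑ m, A m j * cexp (∑ i, c m i * y i) :=
    fun j => funext fun y => hw y j
  have hdivg : divg w = fun y => ∑ m, (A m ⬝ᵥ c m) * cexp (∑ i, c m i * y i) := by
    funext y
    simp only [divg, hw', pd_sum_mul_cexp, dotProduct, Finset.sum_mul]
    exact Finset.sum_comm
  have hlap : lap (fun y => w y j) x =
      ∑ m, A m j * (c m ⬝ᵥ c m) * cexp (∑ i, c m i * x i) := by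
    simp only [lap, hw', pd_sum_mul_cexp, dotProduct, Finset.mul_sum, Finset.sum_mul]
    rw [Finset.sum_comm]
    exact Finset.sum_congr rfl fun m _ => Finset.sum_congr rfl fun i _ => by ring
  simp only [navierOp]
  rw [hlap, hdivg, pd_sum_mul_cexp, hw, Finset.mul_sum, Finset.mul_sum, Finset.mul_sum,
    ← Finset.sum_add_distrib, ← Finset.sum_add_distrib]
  exact Finset.sum_congr rfl fun m _ => by simp only [navierSymbol]; ring

end PlaneWaves

section NavierSymbol

variable {lam mu rho om : ℂ} {c a : Fin 3 → ℂ}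

lemma navierSymbol_smul (s : ℂ) :
    navierSymbol lam mu rho om c (s • a) = s • navierSymbol lam mu rho om c a := by
  funext j
  simp only [navierSymbol, smul_dotProduct, Pi.smul_apply, smul_eq_mul]
  ring

lemma navierSymbol_eq_zero_of_longitudinal (s : ℂ) (ha : a = s • c)
    (hdisp : (lam + 2 * mu) * (c ⬝ᵥ c) + rho * om ^ 2 = 0) :
    navierSymbol lam mu rho om c a = 0 := by
  funext j
  simp only [navierSymbol, ha, smul_dotProduct, Pi.smul_apply, smul_eq_mul, Pi.zero_apply]
  linear_combination s * c j * hdisp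

lemma navierSymbol_eq_zero_of_transverse (ha : a ⬝ᵥ c = 0)
    (hdisp : mu * (c ⬝ᵥ c) + rho * om ^ 2 = 0) :
    navierSymbol lam mu rho om c a = 0 := by
  funext j
  simp only [navierSymbol, ha, Pi.zero_apply]
  linear_combination a j * hdisp

end NavierSymbol

section WaveVector

variable (η₁ η₂ β : ℂ)

def waveVector : Fin 3 → ℂ := ![I * η₁, I * η₂, β]

lemma waveVector_phase (x : Fin 3 → ℝ) :
    ∑ i, waveVector η₁ η₂ β i * x i = β * x 2 + I * (η₁ * x 0 + η₂ * x 1) := by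
  simp only [waveVector, Fin.sum_univ_three, cons_val_zero, cons_val_one, cons_val]
  ring

lemma waveVector_dotProduct_self :
    waveVector η₁ η₂ β ⬝ᵥ waveVector η₁ η₂ β = β ^ 2 - (η₁ ^ 2 + η₂ ^ 2) := by
  simp only [waveVector, dotProduct, Fin.sum_univ_three, cons_val_zero, cons_val_one, cons_val]
  linear_combination (η₁ ^ 2 + η₂ ^ 2) * I_sq

lemma I_smul_waveVector : I • waveVector η₁ η₂ β = ![-η₁, -η₂, I * β] := by
  funext i
  fin_cases i <;> simp [waveVector, ← mul_assoc]

lemma sv_dotProduct_waveVector : ![-β, 0, I * η₁] ⬝ᵥ waveVector η₁ η₂ β = 0 := by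
  simp only [waveVector, dotProduct, Fin.sum_univ_three, cons_val_zero, cons_val_one, cons_val]
  ring

lemma sh_dotProduct_waveVector : ![-η₂, η₁, 0] ⬝ᵥ waveVector η₁ η₂ β = 0 := by
  simp only [waveVector, dotProduct, Fin.sum_univ_three, cons_val_zero, cons_val_one, cons_val]
  ring

end WaveVector

theorem correction_term_solves_navier_general
    (lam mu : ℝ) (rho : ℝ) (om : ℂ)
    (hlm : (lam : ℂ) + 2 * mu ≠ 0) (hmu : (mu : ℂ) ≠ 0)
    (k₁ k₂ : ℂ)
    (hk₁ : k₁ ^ 2 = (rho : ℂ) * om ^ 2 / ((lam : ℂ) + 2 * mu))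
    (hk₂ : k₂ ^ 2 = (rho : ℂ) * om ^ 2 / (mu : ℂ))
    (η₁ η₂ β₁ β₂ : ℂ)
    (hβ₁ : β₁ ^ 2 = η₁ ^ 2 + η₂ ^ 2 - k₁ ^ 2)
    (hβ₂ : β₂ ^ 2 = η₁ ^ 2 + η₂ ^ 2 - k₂ ^ 2)
    (C : Fin 3 → ℂ)
    (w : (Fin 3 → ℝ) → Fin 3 → ℂ)
    (hw : ∀ x j, w x j =
      ∑ m : Fin 3,
        C m * (![![-η₁, -η₂, Complex.I * β₁],
                  ![-β₂, 0, Complex.I * η₁],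
                  ![-η₂, η₁, 0]] : Fin 3 → Fin 3 → ℂ) m j *
          Complex.exp ((![β₁, β₂, β₂] : Fin 3 → ℂ) m * x 2 +
            Complex.I * (η₁ * x 0 + η₂ * x 1))) :
    ∀ x : Fin 3 → ℝ, ∀ j : Fin 3,
      navierOp (lam : ℂ) (mu : ℂ) (rho : ℂ) om w j x = 0 := by
  have hpressure : (lam + 2 * mu) * (β₁ ^ 2 - (η₁ ^ 2 + η₂ ^ 2)) + rho * om ^ 2 = 0 := by
    rw [hβ₁, hk₁]; field_simp; ring
  have hshear : mu * (β₂ ^ 2 - (η₁ ^ 2 + η₂ ^ 2)) + rho * om ^ 2 = 0 := by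
    rw [hβ₂, hk₂]; field_simp; ring
  set ν : Fin 3 → Fin 3 → ℂ := ![![-η₁, -η₂, I * β₁], ![-β₂, 0, I * η₁], ![-η₂, η₁, 0]]
  set c : Fin 3 → Fin 3 → ℂ := fun m => waveVector η₁ η₂ (![β₁, β₂, β₂] m)
  have hsymbol : ∀ m, navierSymbol lam mu rho om (c m) (ν m) = 0 := by
    intro m
    fin_cases m
    · exact navierSymbol_eq_zero_of_longitudinal I (I_smul_waveVector η₁ η₂ β₁).symm
        (by rwa [waveVector_dotProduct_self])
    · exact navierSymbol_eq_zero_of_transverse (sv_dotProduct_waveVector η₁ η₂ β₂)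
        (by rwa [waveVector_dotProduct_self])
    · exact navierSymbol_eq_zero_of_transverse (sh_dotProduct_waveVector η₁ η₂ β₂)
        (by rwa [waveVector_dotProduct_self])
  intro x j
  rw [navierOp_sum_mul_cexp _ _ _ _ (fun m => C m • ν m) c w
    (fun y j => by simp only [c, waveVector_phase, hw, Pi.smul_apply, smul_eq_mul]) x j]
  simp [navierSymbol_smul, hsymbol]

theorem correction_term_solves_navier
    (lam mu : ℝ) (rho : ℝ) (hrho : 0 < rho) (om : ℂ)
    (hlm : (lam : ℂ) + 2 * mu ≠ 0) (hmu : (mu : ℂ) ≠ 0)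
    (k₁ k₂ : ℂ)
    (hk₁ : k₁ ^ 2 = (rho : ℂ) * om ^ 2 / ((lam : ℂ) + 2 * mu))
    (hk₂ : k₂ ^ 2 = (rho : ℂ) * om ^ 2 / (mu : ℂ))
    (η₁ η₂ β₁ β₂ : ℂ)
    (hβ₁ : β₁ ^ 2 = η₁ ^ 2 + η₂ ^ 2 - k₁ ^ 2)
    (hβ₂ : β₂ ^ 2 = η₁ ^ 2 + η₂ ^ 2 - k₂ ^ 2)
    (C : Fin 3 → ℂ)
    (w : (Fin 3 → ℝ) → Fin 3 → ℂ)
    (hw : ∀ x j, w x j =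
      ∑ m : Fin 3,
        C m * (![![-η₁, -η₂, Complex.I * β₁],
                  ![-β₂, 0, Complex.I * η₁],
                  ![-η₂, η₁, 0]] : Fin 3 → Fin 3 → ℂ) m j *
          Complex.exp ((![β₁, β₂, β₂] : Fin 3 → ℂ) m * x 2 +
            Complex.I * (η₁ * x 0 + η₂ * x 1))) :
    ∀ x : Fin 3 → ℝ, ∀ j : Fin 3,
      navierOp (lam : ℂ) (mu : ℂ) (rho : ℂ) om w j x = 0 :=
  correction_term_solves_navier_general lam mu rho om hlm hmu k₁ k₂ hk₁ hk₂ η₁ η₂ β₁ β₂ hβ₁ hβ₂ C w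
    hw
end
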